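/- Let $A$ be the $2q \times 2q$ block companion matrix $A = \begin{pmatrix} \mathcal{A}_1 & \mathcal{A}_2 \\ I_q & 0 \end{pmatrix}$ where $\mathcal{A}_1, \mathcal{A}_2$ are $q \times q$ real matrices. Suppose $\det(I_q - \mathcal{A}_1 z - \mathcal{A}_2 z^2) \neq 0$ for all complex $z$ with $|z| < 1$, and $\mathrm{rk}(I_q - \mathcal{A}_1 - \mathcal{A}_2) = d$ with $0 < d \leq q$. Then $1$ is an eigenvalue of $A$ with geometric multiplicity $q - d$ (in particular, $A$ has at least $q-d$ unit eigenvalues), and all eigenvalues of $A$ lie in the closed unit disk. -/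

import Mathlib

/-!
Writing a vector of `ℝ^q ⊕ ℝ^q` as `(x, y)`, the eigen-equation of the companion matrix
`[[A₁, A₂], [1, 0]]` for `μ` says exactly `x = μ y` and `(μ² - μ A₁ - A₂) y = 0`, so the
`μ`-eigenspace is isomorphic to the kernel of `μ² - μ A₁ - A₂`. At `μ = 1` this is the kernel of
`1 - A₁ - A₂`, of dimension `q - d` by rank–nullity. For `μ ≠ 0`,
`1 - μ⁻¹ A₁ - μ⁻² A₂ = μ⁻² (μ² - μ A₁ - A₂)`, so an eigenvalue `μ` with `|μ| > 1` would make
`det (1 - z A₁ - z² A₂)` vanish at `z = μ⁻¹`, inside the unit disk.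
-/

open Matrix Module End

namespace Matrix

variable {n R : Type*} [Fintype n] [DecidableEq n]

section CommRing

variable [CommRing R] (A₁ A₂ : Matrix n n R) (μ : R)

theorem mem_eigenspace_toLin'_fromBlocks_iff (v : n ⊕ n → R) :
    v ∈ eigenspace (toLin' (fromBlocks A₁ A₂ 1 0)) μ ↔
      v ∘ Sum.inl = μ • (v ∘ Sum.inr) ∧
        v ∘ Sum.inr ∈ LinearMap.ker (μ ^ 2 • 1 - μ • A₁ - A₂).mulVecLin := by
  obtain ⟨x, y, rfl⟩ : ∃ x y, v = Sum.elim x y := ⟨_, _, (Sum.elim_comp_inl_inr v).symm⟩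
  have smul_elim : μ • Sum.elim x y = Sum.elim (μ • x) (μ • y) := Sum.comp_elim (μ • ·) x y
  simp only [mem_eigenspace_iff, toLin'_apply, LinearMap.mem_ker, mulVecLin_apply,
    fromBlocks_mulVec, Sum.elim_comp_inl, Sum.elim_comp_inr, one_mulVec, zero_mulVec, add_zero,
    smul_elim, Sum.elim_eq_iff, sub_mulVec, smul_mulVec, sub_eq_iff_eq_add']
  constructor
  · rintro ⟨h, rfl⟩
    rw [mulVec_smul, smul_smul, ← pow_two] at h
    exact ⟨rfl, h.symm⟩
  · rintro ⟨rfl, h⟩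
    rw [mulVec_smul, smul_smul, ← pow_two]
    exact ⟨h.symm, rfl⟩

noncomputable def eigenspaceCompanionEquiv :
    eigenspace (toLin' (fromBlocks A₁ A₂ 1 0)) μ ≃ₗ[R]
      LinearMap.ker (μ ^ 2 • 1 - μ • A₁ - A₂).mulVecLin where
  toFun v := ⟨v.1 ∘ Sum.inr, ((mem_eigenspace_toLin'_fromBlocks_iff A₁ A₂ μ v).1 v.2).2⟩
  invFun y := ⟨Sum.elim (μ • y.1) y.1,
    (mem_eigenspace_toLin'_fromBlocks_iff A₁ A₂ μ _).2 ⟨rfl, y.2⟩⟩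
  map_add' _ _ := rfl
  map_smul' _ _ := rfl
  left_inv v := by
    ext i
    cases i with
    | inl i => exact (congrFun ((mem_eigenspace_toLin'_fromBlocks_iff A₁ A₂ μ v).1 v.2).1 i).symm
    | inr i => rfl
  right_inv _ := rfl

end CommRing

section Field

variable {K : Type*} [Field K] (A₁ A₂ : Matrix n n K) (μ : K)

theorem finrank_eigenspace_toLin'_fromBlocks :
    finrank K (eigenspace (toLin' (fromBlocks A₁ A₂ 1 0)) μ) =
      Fintype.card n - (μ ^ 2 • 1 - μ • A₁ - A₂).rank := by
  have rank_nullity := (μ ^ 2 • 1 - μ • A₁ - A₂).mulVecLin.finrank_range_add_finrank_ker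
  rw [finrank_fintype_fun_eq_card] at rank_nullity
  rw [(eigenspaceCompanionEquiv A₁ A₂ μ).finrank_eq, rank]
  omega

theorem det_eq_zero_of_hasEigenvalue_toLin'_fromBlocks
    (h : HasEigenvalue (toLin' (fromBlocks A₁ A₂ 1 0)) μ) :
    (μ ^ 2 • 1 - μ • A₁ - A₂).det = 0 := by
  obtain ⟨v, hv, hv0⟩ := Submodule.ne_bot_iff _ |>.1 (hasEigenvalue_iff.1 h)
  set y := eigenspaceCompanionEquiv A₁ A₂ μ ⟨v, hv⟩
  have hy0 : y ≠ 0 := (LinearEquiv.map_ne_zero_iff _).2 (Subtype.coe_ne_coe.1 hv0)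
  exact exists_mulVec_eq_zero_iff.1 ⟨y, Subtype.coe_ne_coe.2 hy0, y.2⟩

theorem det_one_sub_smul_sub_sq_smul_inv_eq_zero (hμ : μ ≠ 0)
    (h : (μ ^ 2 • 1 - μ • A₁ - A₂).det = 0) :
    (1 - μ⁻¹ • A₁ - μ⁻¹ ^ 2 • A₂).det = 0 := by
  have hscale : 1 - μ⁻¹ • A₁ - μ⁻¹ ^ 2 • A₂ = μ⁻¹ ^ 2 • (μ ^ 2 • 1 - μ • A₁ - A₂) := by
    rw [smul_sub, smul_sub, smul_smul, smul_smul, ← mul_pow, inv_mul_cancel₀ hμ, one_pow, one_smul,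
      pow_two, mul_assoc, inv_mul_cancel₀ hμ, mul_one]
  rw [hscale, det_smul, h, mul_zero]

end Field

end Matrix

theorem stmt7_general {q d : ℕ} (A1 A2 : Matrix (Fin q) (Fin q) ℝ)
    (hroots : ∀ z : ℂ, ‖z‖ < 1 →
      ((1 : Matrix (Fin q) (Fin q) ℂ) - z • A1.map Complex.ofReal -
        z ^ 2 • A2.map Complex.ofReal).det ≠ 0)
    (hrank : ((1 : Matrix (Fin q) (Fin q) ℝ) - A1 - A2).rank = d)
    (A : Matrix (Fin q ⊕ Fin q) (Fin q ⊕ Fin q) ℝ)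
    (hA : A = Matrix.fromBlocks A1 A2 1 0) :
    Module.finrank ℝ (Module.End.eigenspace (Matrix.toLin' A) (1 : ℝ)) = q - d ∧
    (d < q → Module.End.HasEigenvalue (Matrix.toLin' A) (1 : ℝ)) ∧
    (∀ μ : ℂ, Module.End.HasEigenvalue (Matrix.toLin' (A.map Complex.ofReal)) μ →
      ‖μ‖ ≤ 1) := by
  subst hA
  have hdim : finrank ℝ (eigenspace (toLin' (fromBlocks A1 A2 1 0)) 1) = q - d := by
    simpa [hrank] using finrank_eigenspace_toLin'_fromBlocks A1 A2 1
  refine ⟨hdim, fun hdq => ?_, fun μ hμ => ?_⟩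
  · rw [hasEigenvalue_iff, ne_eq, ← Submodule.finrank_eq_zero]
    omega
  · rw [fromBlocks_map, Matrix.map_one _ Complex.ofReal_zero Complex.ofReal_one,
      Matrix.map_zero _ Complex.ofReal_zero] at hμ
    have hdet := det_eq_zero_of_hasEigenvalue_toLin'_fromBlocks _ _ μ hμ
    by_contra! hμ1
    have hμ0 : μ ≠ 0 := norm_pos_iff.1 (one_pos.trans hμ1)
    exact hroots μ⁻¹ (by rw [norm_inv]; exact inv_lt_one_of_one_lt₀ hμ1)
      (det_one_sub_smul_sub_sq_smul_inv_eq_zero _ _ μ hμ0 hdet)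

/-- Companion matrix of a cointegrated VAR(2): if `det(I − 𝒜₁ z − 𝒜₂ z²) ≠ 0` for all
`|z| < 1` and `rk(I − 𝒜₁ − 𝒜₂) = d` with `0 < d ≤ q`, then the companion matrix
`A = [[𝒜₁, 𝒜₂], [I, 0]]` has `1` as an eigenvalue with geometric multiplicity `q − d`
(in particular at least `q − d` unit eigenvalues when `d < q`), and all its (complex)
eigenvalues lie in the closed unit disk. -/
theorem stmt7 {q d : ℕ} (A1 A2 : Matrix (Fin q) (Fin q) ℝ)
    (hroots : ∀ z : ℂ, ‖z‖ < 1 →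
      ((1 : Matrix (Fin q) (Fin q) ℂ) - z • A1.map Complex.ofReal -
        z ^ 2 • A2.map Complex.ofReal).det ≠ 0)
    (hrank : ((1 : Matrix (Fin q) (Fin q) ℝ) - A1 - A2).rank = d)
    (hd0 : 0 < d) (hdq : d ≤ q)
    (A : Matrix (Fin q ⊕ Fin q) (Fin q ⊕ Fin q) ℝ)
    (hA : A = Matrix.fromBlocks A1 A2 1 0) :
    Module.finrank ℝ (Module.End.eigenspace (Matrix.toLin' A) (1 : ℝ)) = q - d ∧
    (d < q → Module.End.HasEigenvalue (Matrix.toLin' A) (1 : ℝ)) ∧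
    (∀ μ : ℂ, Module.End.HasEigenvalue (Matrix.toLin' (A.map Complex.ofReal)) μ →
      ‖μ‖ ≤ 1) :=
  stmt7_general A1 A2 hroots hrank A hA
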